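/- If a stratified formula φ is ternary and φ → φ', then exactly one of the following holds: either complexity(φ) < complexity(φ'), or complexity(φ) = complexity(φ') and atomic(φ) > atomic(φ'); similarly for rewrites of ternary stratified terms. -/

import Mathlib

/-- Atoms: pairs of a level (an integer) and an index (a natural number). -/
abbrev Atom : Type := ℤ × ℕ

/-- The level of an atom is its first component. -/
def level (a : Atom) : ℤ := a.1

mutual
/-- Pre-terms of the language of Stratified Sets, in locally nameless form
(so terms are canonical representatives of α-equivalence classes):
atoms (free variables), bound variables (de Bruijn indices), and
comprehensions `{a | φ}` recording the level of the bound atom. -/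
inductive PTerm : Type
  | atom : Atom → PTerm
  | bvar : ℕ → PTerm
  | compr : ℤ → PForm → PTerm
/-- Pre-formulae of the language of Stratified Sets: `⊥`, `¬φ`, `φ ∧ ψ`,
`∀a.φ` (recording the level of the bound atom), and `t ∈ s`. -/
inductive PForm : Type
  | bot : PForm
  | neg : PForm → PForm
  | conj : PForm → PForm → PForm
  | all : ℤ → PForm → PForm
  | mem : PTerm → PTerm → PForm
end

mutual
/-- Substitute the term `u` for the bound variable `k`. -/
def openT (k : ℕ) (u : PTerm) : PTerm → PTerm
  | .atom a => .atom a
  | .bvar j => if j = k then u else .bvar j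
  | .compr i φ => .compr i (openF (k+1) u φ)
/-- Substitute the term `u` for the bound variable `k`. -/
def openF (k : ℕ) (u : PTerm) : PForm → PForm
  | .bot => .bot
  | .neg φ => .neg (openF k u φ)
  | .conj φ ψ => .conj (openF k u φ) (openF k u ψ)
  | .all i φ => .all i (openF (k+1) u φ)
  | .mem t s => .mem (openT k u t) (openT k u s)
end

/-- The level of a (well-formed) term. -/
def levelT : PTerm → ℤ
  | .atom a => level a
  | .bvar _ => 0
  | .compr i _ => i + 1

mutual
/-- Well-formed (locally closed and stratified) terms. -/
inductive WFT : PTerm → Prop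
  | atom (a : Atom) : WFT (.atom a)
  | compr (i : ℤ) (φ : PForm) :
      (∀ n : ℕ, WFF (openF 0 (.atom (i, n)) φ)) → WFT (.compr i φ)
/-- Well-formed (locally closed and stratified) formulae: in `t ∈ s` we require
`level s = level t + 1`. -/
inductive WFF : PForm → Prop
  | bot : WFF .bot
  | neg {φ} : WFF φ → WFF (.neg φ)
  | conj {φ ψ} : WFF φ → WFF ψ → WFF (.conj φ ψ)
  | all (i : ℤ) (φ : PForm) :
      (∀ n : ℕ, WFF (openF 0 (.atom (i, n)) φ)) → WFF (.all i φ)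
  | mem {t s} : WFT t → WFT s → levelT s = levelT t + 1 → WFF (.mem t s)
end

mutual
/-- The rewrite relation on terms: closure of the head rewrite under contexts. -/
inductive RwT : PTerm → PTerm → Prop
  | compr {i φ φ'} : RwF φ φ' → RwT (.compr i φ) (.compr i φ')
/-- The rewrite relation on formulae: `t ∈ {a | φ} → φ[a := t]`, closed under
all syntactic contexts. -/
inductive RwF : PForm → PForm → Prop
  | head (t : PTerm) (i : ℤ) (φ : PForm) :
      RwF (.mem t (.compr i φ)) (openF 0 t φ)
  | neg {φ φ'} : RwF φ φ' → RwF (.neg φ) (.neg φ')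
  | conjL {φ φ' ψ} : RwF φ φ' → RwF (.conj φ ψ) (.conj φ' ψ)
  | conjR {φ ψ ψ'} : RwF ψ ψ' → RwF (.conj φ ψ) (.conj φ ψ')
  | all {i φ φ'} : RwF φ φ' → RwF (.all i φ) (.all i φ')
  | memL {t t' s} : RwT t t' → RwF (.mem t s) (.mem t' s)
  | memR {t s s'} : RwT s s' → RwF (.mem t s) (.mem t s')
end

mutual
/-- Capture-avoiding substitution of the term `u` for the atom `a` in a term. -/
def substT (a : Atom) (u : PTerm) : PTerm → PTerm
  | .atom b => if b = a then u else .atom b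
  | .bvar j => .bvar j
  | .compr i φ => .compr i (substF a u φ)
/-- Capture-avoiding substitution of the term `u` for the atom `a` in a formula. -/
def substF (a : Atom) (u : PTerm) : PForm → PForm
  | .bot => .bot
  | .neg φ => .neg (substF a u φ)
  | .conj φ ψ => .conj (substF a u φ) (substF a u ψ)
  | .all i φ => .all i (substF a u φ)
  | .mem t s => .mem (substT a u t) (substT a u s)
end

mutual
/-- Number of occurrences of the bound variable `k` in a term. -/
def countBT (k : ℕ) : PTerm → ℕ
  | .atom _ => 0
  | .bvar j => if j = k then 1 else 0
  | .compr _ φ => countBF (k+1) φ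
/-- Number of occurrences of the bound variable `k` in a formula. -/
def countBF (k : ℕ) : PForm → ℕ
  | .bot => 0
  | .neg φ => countBF k φ
  | .conj φ ψ => countBF k φ + countBF k ψ
  | .all _ φ => countBF (k+1) φ
  | .mem t s => countBT k t + countBT k s
end

mutual
/-- Number of free occurrences of the atom `a` in a term. -/
def countAT (a : Atom) : PTerm → ℕ
  | .atom b => if b = a then 1 else 0
  | .bvar _ => 0
  | .compr _ φ => countAF a φ
/-- Number of free occurrences of the atom `a` in a formula. -/
def countAF (a : Atom) : PForm → ℕ
  | .bot => 0
  | .neg φ => countAF a φ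
  | .conj φ ψ => countAF a φ + countAF a ψ
  | .all _ φ => countAF a φ
  | .mem t s => countAT a t + countAT a s
end

mutual
/-- A term is ternary when every comprehension in it binds a variable which
occurs at least three times in its body. -/
def TernT : PTerm → Prop
  | .atom _ => True
  | .bvar _ => True
  | .compr _ φ => 3 ≤ countBF 0 φ ∧ TernF φ
/-- A formula is ternary when every comprehension in it binds a variable which
occurs at least three times in its body. -/
def TernF : PForm → Prop
  | .bot => True
  | .neg φ => TernF φ
  | .conj φ ψ => TernF φ ∧ TernF ψ
  | .all _ φ => TernF φ
  | .mem t s => TernT t ∧ TernT s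
end

/-- Whether a term is an atom (a variable). -/
def isAtomLike : PTerm → Bool
  | .atom _ => true
  | .bvar _ => true
  | .compr _ _ => false

/-- Whether a term is a comprehension. -/
def isCompr : PTerm → Bool
  | .compr _ _ => true
  | _ => false

mutual
/-- Complexity of a term. -/
def complexityT : PTerm → ℕ
  | .atom _ => 1
  | .bvar _ => 1
  | .compr _ φ => 1 + complexityF φ
/-- Complexity of a formula; note `complexity (b ∈ {a | φ}) = complexity φ`
for an atom `b` (and `complexityT {a | φ} - 1 = complexity φ`). -/
def complexityF : PForm → ℕ
  | .bot => 3
  | .neg φ => 1 + complexityF φ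
  | .conj φ ψ => complexityF φ + 1 + complexityF ψ
  | .all _ φ => 1 + complexityF φ
  | .mem t s =>
      if isAtomLike t && isCompr s then complexityT s - 1
      else complexityT t + 1 + complexityT s
end

mutual
/-- The number of atomic reducts in a term. -/
def atomicT : PTerm → ℕ
  | .atom _ => 0
  | .bvar _ => 0
  | .compr _ φ => atomicF φ
/-- The number of atomic reducts in a formula; note
`atomic (b ∈ {a | φ}) = atomic φ + 1 = atomicT {a | φ} + 1` for an atom `b`. -/
def atomicF : PForm → ℕ
  | .bot => 0
  | .neg φ => atomicF φ
  | .conj φ ψ => atomicF φ + atomicF ψ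
  | .all _ φ => atomicF φ
  | .mem t s =>
      if isAtomLike t && isCompr s then atomicT s + 1
      else atomicT t + atomicT s
end

/-! A rewrite in a context changes complexity and atomic count exactly as the rewritten subterm
does, so only the head step `t ∈ {a | φ} → φ[a := t]` matters. If `t` is an atom, the
substitution preserves complexity (`complexity (b ∈ {a | φ}) = complexity φ` is designed for
this) and removes one atomic redex. If `t` is a comprehension, each occurrence of `a` costs at
most 4 but gains `complexity t`; ternarity gives at least three occurrences and, by the same
counting, `complexity t ≥ 8`, so the gain `3 (complexity t - 4)` exceeds the
`complexity t + 2` the redex had in addition to `φ`. -/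

theorem isAtomLike_eq_not_isCompr : ∀ t : PTerm, isAtomLike t = !isCompr t
  | .atom _ | .bvar _ | .compr _ _ => rfl

theorem one_le_complexityT : ∀ t : PTerm, 1 ≤ complexityT t
  | .atom _ | .bvar _ => le_rfl
  | .compr _ _ => Nat.le_add_right 1 _

theorem complexityF_mem_add (t s : PTerm) :
    complexityF (.mem t s) + (if isAtomLike t && isCompr s then 3 else 0) =
      complexityT t + 1 + complexityT s := by
  rcases t with _ | _ | _ <;> rcases s with _ | _ | _ <;>
    simp only [complexityF, complexityT, isAtomLike, isCompr, Bool.and_self, Bool.and_false,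
      Bool.and_true, Bool.false_eq_true, ↓reduceIte] <;> omega

theorem complexityF_mem_le (t s : PTerm) :
    complexityF (.mem t s) ≤ complexityT t + 1 + complexityT s := by
  have := complexityF_mem_add t s; split at this <;> omega

theorem le_complexityF_mem (t s : PTerm) :
    complexityT t + complexityT s ≤ complexityF (.mem t s) + 2 := by
  have := complexityF_mem_add t s; split at this <;> omega

theorem three_le_complexityF : ∀ φ : PForm, 3 ≤ complexityF φ
  | .bot => le_rfl
  | .neg φ | .all _ φ => by have := three_le_complexityF φ; simp only [complexityF]; omega
  | .conj φ ψ => by have := three_le_complexityF φ; simp only [complexityF]; omega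
  | .mem t (.compr i χ) => by
    have := le_complexityF_mem t (.compr i χ)
    have := one_le_complexityT t
    have := three_le_complexityF χ
    simp only [complexityT] at *; omega
  | .mem t (.atom _) | .mem t (.bvar _) => by
    have := one_le_complexityT t
    rw [complexityF, if_neg (by simp [isCompr])]; simp only [complexityT]; omega

theorem countBT_le_one_of_isAtomLike (k : ℕ) : ∀ {t : PTerm}, isAtomLike t → countBT k t ≤ 1
  | .atom _, _ => zero_le_one
  | .bvar j, _ => by simp only [countBT]; split <;> omega

mutual
theorem TernF.seven_le_complexityF : ∀ {φ : PForm}, TernF φ → ∀ {k : ℕ}, 3 ≤ countBF k φ →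
    7 ≤ complexityF φ
  | .bot, _, _, hk => by simp [countBF] at hk
  | .neg φ, h, _, hk | .all _ φ, h, _, hk => by
    have := TernF.seven_le_complexityF (φ := φ) h hk
    simp only [complexityF]; omega
  | .conj φ ψ, _, _, _ => by
    have := three_le_complexityF φ; have := three_le_complexityF ψ
    simp only [complexityF]; omega
  | .mem t s, h, k, hk => by
    have := le_complexityF_mem t s
    have := one_le_complexityT t
    have := one_le_complexityT s
    by_cases ht : isCompr t
    · have := TernT.eight_le_complexityT h.1 ht; omega
    by_cases hs : isCompr s
    · have := TernT.eight_le_complexityT h.2 hs; omega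
    have := countBT_le_one_of_isAtomLike k (by simpa [isAtomLike_eq_not_isCompr] using ht)
    have := countBT_le_one_of_isAtomLike k (by simpa [isAtomLike_eq_not_isCompr] using hs)
    simp only [countBF] at hk; omega

theorem TernT.eight_le_complexityT : ∀ {t : PTerm}, TernT t → isCompr t → 8 ≤ complexityT t
  | .compr _ φ, h, _ => by
    have := TernF.seven_le_complexityF h.2 h.1
    simp only [complexityT]; omega
end

section OpenAtomLike

variable {u : PTerm}

theorem isAtomLike_openT (hu : isAtomLike u) (k : ℕ) : ∀ t, isAtomLike (openT k u t) = isAtomLike t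
  | .atom _ | .compr _ _ => rfl
  | .bvar j => by simp only [openT]; split; exacts [hu, rfl]

theorem isCompr_openT (hu : isAtomLike u) (k : ℕ) : ∀ t, isCompr (openT k u t) = isCompr t
  | .atom _ | .compr _ _ => rfl
  | .bvar j => by
    simp only [openT]; split
    · rcases u with _ | _ | _ <;> simp_all [isAtomLike, isCompr]
    · rfl

mutual
theorem complexityT_openT_of_isAtomLike (hu : isAtomLike u) (k : ℕ) :
    ∀ t, complexityT (openT k u t) = complexityT t
  | .atom _ => rfl
  | .bvar j => by
    simp only [openT]; split
    · rcases u with _ | _ | _ <;> simp_all [isAtomLike, complexityT]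
    · rfl
  | .compr _ φ => by simp only [openT, complexityT, complexityF_openF_of_isAtomLike hu (k + 1) φ]

theorem complexityF_openF_of_isAtomLike (hu : isAtomLike u) (k : ℕ) :
    ∀ φ, complexityF (openF k u φ) = complexityF φ
  | .bot => rfl
  | .neg φ => by simp only [openF, complexityF, complexityF_openF_of_isAtomLike hu k φ]
  | .conj φ ψ => by
    simp only [openF, complexityF, complexityF_openF_of_isAtomLike hu k φ,
      complexityF_openF_of_isAtomLike hu k ψ]
  | .all _ φ => by simp only [openF, complexityF, complexityF_openF_of_isAtomLike hu (k + 1) φ]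
  | .mem t s => by
    simp only [openF, complexityF, isAtomLike_openT hu k t, isCompr_openT hu k s,
      complexityT_openT_of_isAtomLike hu k t, complexityT_openT_of_isAtomLike hu k s]
end

mutual
theorem atomicT_openT_of_isAtomLike (hu : isAtomLike u) (k : ℕ) :
    ∀ t, atomicT (openT k u t) = atomicT t
  | .atom _ => rfl
  | .bvar j => by
    simp only [openT]; split
    · rcases u with _ | _ | _ <;> simp_all [isAtomLike, atomicT]
    · rfl
  | .compr _ φ => by simp only [openT, atomicT, atomicF_openF_of_isAtomLike hu (k + 1) φ]

theorem atomicF_openF_of_isAtomLike (hu : isAtomLike u) (k : ℕ) :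
    ∀ φ, atomicF (openF k u φ) = atomicF φ
  | .bot => rfl
  | .neg φ => by simp only [openF, atomicF, atomicF_openF_of_isAtomLike hu k φ]
  | .conj φ ψ => by
    simp only [openF, atomicF, atomicF_openF_of_isAtomLike hu k φ,
      atomicF_openF_of_isAtomLike hu k ψ]
  | .all _ φ => by simp only [openF, atomicF, atomicF_openF_of_isAtomLike hu (k + 1) φ]
  | .mem t s => by
    simp only [openF, atomicF, isAtomLike_openT hu k t, isCompr_openT hu k s,
      atomicT_openT_of_isAtomLike hu k t, atomicT_openT_of_isAtomLike hu k s]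
end

end OpenAtomLike

theorem isAtomLike_openT_of_ne {k : ℕ} {u : PTerm} :
    ∀ {t : PTerm}, t ≠ .bvar k → isAtomLike (openT k u t) = isAtomLike t
  | .atom _, _ | .compr _ _, _ => rfl
  | .bvar j, h => by rw [openT, if_neg (show j ≠ k by rintro rfl; exact h rfl)]

theorem isCompr_openT_of_ne {k : ℕ} {u : PTerm} :
    ∀ {t : PTerm}, t ≠ .bvar k → isCompr (openT k u t) = isCompr t
  | .atom _, _ | .compr _ _, _ => rfl
  | .bvar j, h => by rw [openT, if_neg (show j ≠ k by rintro rfl; exact h rfl)]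

/- Each substituted occurrence costs at most 4: the worst case is `a ∈ x` (complexity 3)
becoming `a ∈ u`, of complexity `complexityT u - 1`. -/
mutual
theorem complexityT_add_mul_le_openT (k : ℕ) (u : PTerm) :
    ∀ t, complexityT t + countBT k t * complexityT u ≤ complexityT (openT k u t) + 4 * countBT k t
  | .atom _ => by simp only [openT, countBT]; omega
  | .bvar j => by
    simp only [openT, countBT]
    split <;> simp only [complexityT] <;> omega
  | .compr _ φ => by
    have := complexityF_add_mul_le_openF (k + 1) u φ
    simp only [openT, countBT, complexityT]; omega

theorem complexityF_add_mul_le_openF (k : ℕ) (u : PTerm) :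
    ∀ φ, complexityF φ + countBF k φ * complexityT u ≤ complexityF (openF k u φ) + 4 * countBF k φ
  | .bot => by simp only [openF, countBF]; omega
  | .neg φ => by
    have := complexityF_add_mul_le_openF k u φ
    simp only [openF, countBF, complexityF]; omega
  | .conj φ ψ => by
    have := complexityF_add_mul_le_openF k u φ
    have := complexityF_add_mul_le_openF k u ψ
    simp only [openF, countBF, complexityF, Nat.add_mul]; omega
  | .all _ φ => by
    have := complexityF_add_mul_le_openF (k + 1) u φ
    simp only [openF, countBF, complexityF]; omega
  | .mem t s => by
    have ht := complexityT_add_mul_le_openT k u t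
    have hs := complexityT_add_mul_le_openT k u s
    simp only [openF, countBF, Nat.add_mul]
    by_cases hk : t = .bvar k ∨ s = .bvar k
    · -- the node may lose 3 by becoming `a ∈ {b | ψ}`; the slack of `bvar k` absorbs it
      have := complexityF_mem_le t s
      have := le_complexityF_mem (openT k u t) (openT k u s)
      rcases hk with rfl | rfl <;>
        simp only [openT, countBT, ↓reduceIte, complexityT] at * <;> omega
    · push Not at hk
      have h := complexityF_mem_add t s
      have h' := complexityF_mem_add (openT k u t) (openT k u s)
      rw [isAtomLike_openT_of_ne hk.1, isCompr_openT_of_ne hk.2] at h'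
      by_cases hc : isAtomLike t && isCompr s <;> simp only [hc, ↓reduceIte] at h h' <;> omega
end

theorem complexityF_openF_of_isAtomLike_redex {t : PTerm} (ht : isAtomLike t) (i : ℤ) (φ : PForm) :
    complexityF (openF 0 t φ) = complexityF (.mem t (.compr i φ)) ∧
      atomicF (openF 0 t φ) + 1 = atomicF (.mem t (.compr i φ)) := by
  simp only [complexityF, atomicF, ht, complexityT, atomicT, isCompr, Bool.and_self, ↓reduceIte,
    complexityF_openF_of_isAtomLike ht, atomicF_openF_of_isAtomLike ht, Nat.add_sub_cancel_left,
    and_self]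

theorem complexityF_lt_openF_of_isCompr_redex {t : PTerm} (ht : TernT t) (htc : isCompr t) {i : ℤ}
    {φ : PForm} (hφ : TernT (.compr i φ)) :
    complexityF (.mem t (.compr i φ)) < complexityF (openF 0 t φ) := by
  have h8 := TernT.eight_le_complexityT ht htc
  have hopen := complexityF_add_mul_le_openF 0 t φ
  have hcount : 3 ≤ countBF 0 φ := hφ.1
  have hmem := complexityF_mem_add t (.compr i φ)
  simp only [isAtomLike_eq_not_isCompr t, htc, Bool.not_true, Bool.false_and, Bool.false_eq_true,
    ↓reduceIte, add_zero, complexityT] at hmem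
  nlinarith

mutual
theorem RwF.complexityF_lt_or_atomicF_lt : ∀ {φ φ' : PForm}, RwF φ φ' → TernF φ →
    complexityF φ < complexityF φ' ∨ complexityF φ' = complexityF φ ∧ atomicF φ' < atomicF φ
  | _, _, .head t i φ, h => by
    cases htc : isCompr t
    · have := complexityF_openF_of_isAtomLike_redex
        (by rw [isAtomLike_eq_not_isCompr, htc]; rfl) i φ
      omega
    · exact Or.inl (complexityF_lt_openF_of_isCompr_redex h.1 htc h.2)
  | _, _, .neg r, h | _, _, .all r, h => by
    have := r.complexityF_lt_or_atomicF_lt h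
    simp only [complexityF, atomicF]; omega
  | _, _, .conjL r, h => by
    have := r.complexityF_lt_or_atomicF_lt h.1
    simp only [complexityF, atomicF]; omega
  | _, _, .conjR r, h => by
    have := r.complexityF_lt_or_atomicF_lt h.2
    simp only [complexityF, atomicF]; omega
  | _, _, .memL (.compr r), h => by
    have := RwT.complexityT_lt_or_atomicT_lt (.compr r) h.1
    simp only [complexityF, atomicF, complexityT, atomicT, isAtomLike, Bool.false_and,
      Bool.false_eq_true, ↓reduceIte] at *
    omega
  | _, _, .memR (t := t) (.compr r), h => by
    have := RwT.complexityT_lt_or_atomicT_lt (.compr r) h.2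
    simp only [complexityF, atomicF, complexityT, atomicT, isCompr, Bool.and_true] at *
    cases isAtomLike t <;> simp only [Bool.false_eq_true, ↓reduceIte] <;> omega

theorem RwT.complexityT_lt_or_atomicT_lt : ∀ {t t' : PTerm}, RwT t t' → TernT t →
    complexityT t < complexityT t' ∨ complexityT t' = complexityT t ∧ atomicT t' < atomicT t
  | _, _, .compr r, h => by
    have := r.complexityF_lt_or_atomicF_lt h.2
    simp only [complexityT, atomicT]; omega
end

theorem xor_of_lt_or_eq_and_lt {c c' a a' : ℕ} (h : c < c' ∨ c' = c ∧ a' < a) :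
    Xor (c < c') (c' = c ∧ a' < a) :=
  (xor_iff_or_and_not_and _ _).2 ⟨h, fun ⟨hlt, heq, _⟩ => hlt.ne' heq⟩

/-- A rewrite of a ternary stratified formula (or term) either strictly
increases complexity, or else preserves complexity and strictly decreases the
number of atomic reducts — and exactly one of these alternatives holds. -/
theorem rw_complexity_or_atomic :
    (∀ φ φ' : PForm, WFF φ → TernF φ → RwF φ φ' →
        Xor' (complexityF φ < complexityF φ')
          (complexityF φ' = complexityF φ ∧ atomicF φ' < atomicF φ)) ∧
      (∀ t t' : PTerm, WFT t → TernT t → RwT t t' →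
        Xor' (complexityT t < complexityT t')
          (complexityT t' = complexityT t ∧ atomicT t' < atomicT t)) :=
  ⟨fun _ _ _ h r => xor_of_lt_or_eq_and_lt (r.complexityF_lt_or_atomicF_lt h),
    fun _ _ _ h r => xor_of_lt_or_eq_and_lt (r.complexityT_lt_or_atomicT_lt h)⟩
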